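/- Let G be a temporal directed graph, S ⊆ V a set of source vertices, and [tα,tω] a time interval; for v ∈ V let ea(v) denote the earliest arrival time from S to v within [tα,tω], with ea(s) = tα for s ∈ S and ea(v) = ∞ if v is unreachable. Let A ⊆ V with S ⊆ A, and suppose some vertex outside A is reachable, so that m := min_{v∉A} ea(v) < ∞. For v ∉ A define the tentative arrival tent(v) := min{ t+1 : there exists u ∈ A with (u,v) ∈ E_t, ea(u) ≤ t, and t+1 ≤ tω } (min over the empty set is ∞). Then min_{v∉A} tent(v) = m, and every vertex v ∉ A attaining this minimum satisfies tent(v) = ea(v) = m. (This is the greedy invariant establishing the correctness claim of Theorem 2: the Dijkstra-based extraction of the unsettled vertex with minimum tentative arrival time correctly settles its earliest arrival time.) -/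

import Mathlib

/-!
Every tentative arrival is realized by a temporal path: take an earliest path to the tail `u` of
the edge and append the edge, or cut the path at `x` if it already visits `x`; so `ea ≤ tent`.
Conversely, a temporal path from `S ⊆ A` to a vertex outside `A` leaves `A` along a first edge
`(u, w)` at time `t`, and its prefix reaches `u` by time `t`, so `tent w ≤ t + 1` is at most the
arrival time of the path. Hence `tent` and `ea` have the same minimum `m` on `Aᶜ`, and a
minimizer `v` of `tent` satisfies `m ≤ ea v ≤ tent v = m`.
-/

/-- A temporal `(s,d)`-path within the time interval `[tα, tω]` in a temporal directed
graph on vertex type `V` with time-indexed edge relation `E`: a sequence of pairwise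
distinct vertices `v 0 = s, …, v k = d` together with strictly increasing departure
times `t 1 < ⋯ < t k` (here `t i` is the time of the edge from `v i` to `v (i+1)`),
each edge present at its departure time, all departure times `≥ tα`, and arrival
`t k + 1 ≤ tω`.  The empty path (`k = 0`) requires `s = d`. -/
structure TPath (V : Type*) (E : ℕ → V → V → Prop) (s d : V) (tα tω : ℕ) where
  k : ℕ
  v : Fin (k + 1) → V
  t : Fin k → ℕ
  hv0 : v 0 = s
  hvk : v (Fin.last k) = d
  inj : Function.Injective v
  mono : StrictMono t
  hedge : ∀ i : Fin k, E (t i) (v i.castSucc) (v i.succ)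
  hstart : ∀ i : Fin k, tα ≤ t i
  hend : ∀ i : Fin k, t i + 1 ≤ tω

namespace TPath

variable {V : Type*} {E : ℕ → V → V → Prop} {s d : V} {tα tω : ℕ}

/-- Ending (arrival) time of a temporal path: `t k + 1`; the empty path arrives at `tα`. -/
def endTime (π : TPath V E s d tα tω) : ℕ :=
  if h : 0 < π.k then π.t ⟨π.k - 1, by omega⟩ + 1 else tα

/-- `x` is the index of the first point of contact of the path `π` with the decoy set `C`:
`π.v x ∈ C`, and `x` is the least such index. -/
def hitsAt (π : TPath V E s d tα tω) (C : Set V) (x : Fin (π.k + 1)) : Prop :=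
  π.v x ∈ C ∧ ∀ j : Fin (π.k + 1), π.v j ∈ C → x ≤ j

/-- Index of the first vertex of `π` lying in `C` (`sInf ∅ = 0` if there is none). -/
noncomputable def firstContact (π : TPath V E s d tα tω) (C : Set V) : ℕ :=
  sInf {i : ℕ | ∃ h : i < π.k + 1, π.v ⟨i, h⟩ ∈ C}

/-- Response time `RT(π, C) = t k − t x` where `v x` is the first point of contact of `π`
with `C` (entered via the edge with time `t x`); junk value `0` if `π` does not meet `C`
properly. -/
noncomputable def RT (π : TPath V E s d tα tω) (C : Set V) : ℕ :=
  if h : 0 < π.firstContact C ∧ π.firstContact C ≤ π.k ∧ 0 < π.k then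
    π.t ⟨π.k - 1, by omega⟩ - π.t ⟨π.firstContact C - 1, by omega⟩
  else 0

end TPath

/-- Earliest arrival time from the source set `S` to `x` within `[tα, tω]`
(`⊤ = ∞` if unreachable; it is `tα` for `x ∈ S`, realized by the empty path). -/
noncomputable def ea {V : Type*} (E : ℕ → V → V → Prop) (S : Set V) (tα tω : ℕ)
    (x : V) : ℕ∞ :=
  sInf {n : ℕ∞ | ∃ s ∈ S, ∃ π : TPath V E s x tα tω, n = (π.endTime : ℕ∞)}

/-- `C` is a temporal `(S,d)`-cut within `[tα, tω]`: every temporal `(s,d)`-path within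
`[tα, tω]` with `s ∈ S` contains a vertex of `C`. -/
def IsTemporalCut {V : Type*} (E : ℕ → V → V → Prop) (S : Set V) (d : V) (tα tω : ℕ)
    (C : Set V) : Prop :=
  ∀ s ∈ S, ∀ π : TPath V E s d tα tω, ∃ i, π.v i ∈ C

/-- Tentative arrival time of `x ∉ A`: the least `t + 1` over edges `(u, x)` at time `t`
with `u ∈ A`, `ea u ≤ t` and `t + 1 ≤ tω` (`⊤` if no such edge exists). -/
noncomputable def tent {V : Type*} (E : ℕ → V → V → Prop) (S A : Set V) (tα tω : ℕ)
    (x : V) : ℕ∞ :=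
  sInf {n : ℕ∞ | ∃ u ∈ A, ∃ t : ℕ,
    E t u x ∧ ea E S tα tω u ≤ (t : ℕ∞) ∧ t + 1 ≤ tω ∧ n = (t : ℕ∞) + 1}

namespace TPath

variable {V : Type*} {E : ℕ → V → V → Prop} {s d : V} {tα tω : ℕ}

lemma tα_le_endTime (π : TPath V E s d tα tω) : tα ≤ π.endTime := by
  unfold endTime
  split
  · exact (π.hstart _).trans (Nat.le_succ _)
  · exact le_rfl

lemma t_add_one_le_endTime (π : TPath V E s d tα tω) (i : Fin π.k) :
    π.t i + 1 ≤ π.endTime := by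
  have hk : 0 < π.k := i.pos
  rw [endTime, dif_pos hk, Nat.add_le_add_iff_right]
  exact π.mono.monotone (Fin.mk_le_mk.mpr (by omega))

lemma endTime_le (π : TPath V E s d tα tω) {T : ℕ} (hα : tα ≤ T)
    (ht : ∀ i, π.t i + 1 ≤ T) : π.endTime ≤ T := by
  unfold endTime
  split
  · exact ht _
  · exact hα

def take (π : TPath V E s d tα tω) (j : Fin (π.k + 1)) {x : V} (hj : π.v j = x) :
    TPath V E s x tα tω where
  k := j
  v i := π.v (Fin.castLE j.isLt i)
  t i := π.t (Fin.castLE (Nat.lt_succ_iff.mp j.isLt) i)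
  hv0 := π.hv0
  hvk := hj
  inj _ _ h := Fin.castLE_injective _ (π.inj h)
  mono _ _ h := π.mono h
  hedge _ := π.hedge _
  hstart _ := π.hstart _
  hend _ := π.hend _

lemma endTime_take_le (π : TPath V E s d tα tω) (j : Fin (π.k + 1)) {x : V}
    (hj : π.v j = x) : (π.take j hj).endTime ≤ π.endTime :=
  endTime_le _ π.tα_le_endTime fun _ ↦ π.t_add_one_le_endTime _

lemma endTime_take_castSucc_le (π : TPath V E s d tα tω) (i : Fin π.k) {x : V}
    (hi : π.v i.castSucc = x) : (π.take i.castSucc hi).endTime ≤ π.t i :=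
  endTime_le _ (π.hstart i) fun j ↦ π.mono (Fin.mk_lt_mk.mpr j.isLt)

def snoc (π : TPath V E s d tα tω) {x : V} {t' : ℕ} (hx : x ∉ Set.range π.v)
    (hE : E t' d x) (hle : π.endTime ≤ t') (hω : t' + 1 ≤ tω) : TPath V E s x tα tω where
  k := π.k + 1
  v := Fin.snoc π.v x
  t := Fin.snoc π.t t'
  hv0 := by
    rw [show (0 : Fin (π.k + 2)) = Fin.castSucc 0 from rfl, Fin.snoc_castSucc]
    exact π.hv0
  hvk := Fin.snoc_last _ _
  inj := Fin.snoc_injective_of_injective π.inj hx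
  mono a b hab := by
    obtain ⟨a, rfl⟩ := Fin.exists_castSucc_eq.mpr (Fin.ne_last_of_lt hab)
    induction b using Fin.lastCases with
    | last =>
      simp only [Fin.snoc_castSucc, Fin.snoc_last]
      have := π.t_add_one_le_endTime a
      omega
    | cast b => simpa using π.mono (Fin.castSucc_lt_castSucc_iff.mp hab)
  hedge i := by
    induction i using Fin.lastCases with
    | last => simpa [π.hvk] using hE
    | cast i =>
      simp only [Fin.snoc_castSucc, Fin.succ_castSucc]
      exact π.hedge i
  hstart i := by
    induction i using Fin.lastCases with
    | last => simpa using π.tα_le_endTime.trans hle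
    | cast i => simpa using π.hstart i
  hend i := by
    induction i using Fin.lastCases with
    | last => simpa using hω
    | cast i => simpa using π.hend i

lemma endTime_snoc_le (π : TPath V E s d tα tω) {x : V} {t' : ℕ} (hx : x ∉ Set.range π.v)
    (hE : E t' d x) (hle : π.endTime ≤ t') (hω : t' + 1 ≤ tω) :
    (π.snoc hx hE hle hω).endTime ≤ t' + 1 := by
  refine endTime_le _ (by have := π.tα_le_endTime; omega) fun i ↦ ?_
  induction i using Fin.lastCases with
  | last => simp [snoc]
  | cast i =>
    simp only [snoc, Fin.snoc_castSucc]
    have := π.t_add_one_le_endTime i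
    omega

end TPath

lemma Fin.exists_castSucc_and_not_succ {k : ℕ} {p : Fin (k + 1) → Prop} (h0 : p 0)
    (hk : ¬ p (Fin.last k)) : ∃ i : Fin k, p i.castSucc ∧ ¬ p i.succ := by
  induction k with
  | zero => exact absurd h0 hk
  | succ k ih =>
    by_cases hlast : p (Fin.last k).castSucc
    · exact ⟨Fin.last k, hlast, hk⟩
    · obtain ⟨i, hi, hi'⟩ := ih (p := p ∘ Fin.castSucc) h0 hlast
      exact ⟨i.castSucc, hi, hi'⟩

section EarliestArrival

variable {V : Type*} {E : ℕ → V → V → Prop} {S : Set V} {tα tω : ℕ}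

lemma ea_le_endTime {s x : V} (hs : s ∈ S) (π : TPath V E s x tα tω) :
    ea E S tα tω x ≤ π.endTime :=
  sInf_le ⟨s, hs, π, rfl⟩

lemma exists_endTime_le_of_ea_le {x : V} {T : ℕ} (h : ea E S tα tω x ≤ T) :
    ∃ s ∈ S, ∃ π : TPath V E s x tα tω, π.endTime ≤ T := by
  obtain ⟨_, ⟨s, hs, π, rfl⟩, hlt⟩ :=
    sInf_lt_iff.mp (h.trans_lt (ENat.natCast_lt_natCast.mpr T.lt_succ_self))
  exact ⟨s, hs, π, Nat.lt_succ_iff.mp (ENat.natCast_lt_natCast.mp hlt)⟩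

lemma ea_le_of_edge {u x : V} {t : ℕ} (hE : E t u x) (hu : ea E S tα tω u ≤ t)
    (hω : t + 1 ≤ tω) : ea E S tα tω x ≤ (t + 1 : ℕ) := by
  obtain ⟨s, hs, π, hπ⟩ := exists_endTime_le_of_ea_le hu
  by_cases hx : x ∈ Set.range π.v
  · obtain ⟨i, hi⟩ := hx
    calc ea E S tα tω x ≤ (π.take i hi).endTime := ea_le_endTime hs _
      _ ≤ (t + 1 : ℕ) := by exact_mod_cast (π.endTime_take_le i hi).trans (by omega)
  · exact (ea_le_endTime hs _).trans (by exact_mod_cast π.endTime_snoc_le hx hE hπ hω)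

lemma ea_le_tent (A : Set V) (x : V) : ea E S tα tω x ≤ tent E S A tα tω x :=
  le_sInf <| by
    rintro _ ⟨u, -, t, hE, hu, hω, rfl⟩
    exact_mod_cast ea_le_of_edge hE hu hω

lemma exists_tent_le_endTime {A : Set V} (hSA : S ⊆ A) {s v : V} (hs : s ∈ S) (hv : v ∉ A)
    (π : TPath V E s v tα tω) : ∃ w ∉ A, tent E S A tα tω w ≤ π.endTime := by
  obtain ⟨i, hi, hi'⟩ := Fin.exists_castSucc_and_not_succ (p := fun j ↦ π.v j ∈ A)
    (by rw [π.hv0]; exact hSA hs) (by rw [π.hvk]; exact hv)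
  refine ⟨π.v i.succ, hi', sInf_le_of_le ⟨_, hi, π.t i, π.hedge i, ?_, π.hend i, rfl⟩ ?_⟩
  · exact (ea_le_endTime hs (π.take i.castSucc rfl)).trans
      (by exact_mod_cast π.endTime_take_castSucc_le i rfl)
  · exact_mod_cast π.t_add_one_le_endTime i

lemma iInf_tent_eq_iInf_ea {A : Set V} (hSA : S ⊆ A) :
    ⨅ v ∈ Aᶜ, tent E S A tα tω v = ⨅ v ∈ Aᶜ, ea E S tα tω v := by
  refine le_antisymm (le_iInf₂ fun v hv ↦ le_sInf ?_)
    (iInf₂_mono fun v _ ↦ ea_le_tent A v)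
  rintro _ ⟨s, hs, π, rfl⟩
  obtain ⟨w, hw, hle⟩ := exists_tent_le_endTime hSA hs hv π
  exact (biInf_le _ hw).trans hle

end EarliestArrival

theorem dijkstra_greedy_invariant {V : Type*} (E : ℕ → V → V → Prop)
    (S A : Set V) (tα tω : ℕ) (hSA : S ⊆ A) :
    (⨅ v ∈ Aᶜ, tent E S A tα tω v) = (⨅ v ∈ Aᶜ, ea E S tα tω v) ∧
    ∀ v ∉ A, tent E S A tα tω v = (⨅ w ∈ Aᶜ, tent E S A tα tω w) →
      tent E S A tα tω v = ea E S tα tω v ∧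
      ea E S tα tω v = (⨅ w ∈ Aᶜ, ea E S tα tω w) := by
  refine ⟨iInf_tent_eq_iInf_ea hSA, fun v hv htent ↦ ?_⟩
  rw [iInf_tent_eq_iInf_ea hSA] at htent
  have hea : ea E S tα tω v = ⨅ w ∈ Aᶜ, ea E S tα tω w :=
    le_antisymm (htent ▸ ea_le_tent A v) (biInf_le _ hv)
  exact ⟨htent.trans hea.symm, hea⟩
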